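/- Let P be a finite bounded weakly ranked poset. The number of Feichtner–Yuzvinsky monomials of degree k equals the coefficient of t^k in the Chow polynomial H_P(t); i.e., h_k = |FY^k|. -/

import Mathlib

/-! An FY monomial of degree `k` is the same thing as a chain `⊥ < p_1 < ⋯ < p_s` together with
exponents `1 ≤ ℓ_i < ρ(p_i) - ρ(p_{i-1})` summing to `k`: the chain is recovered as the support of
the monomial (a strictly monotone map out of `Fin s` is determined by its range) and the exponents
as its values. Expanding the product in `H_P(t)` shows that the coefficient of `t^k` counts exactly
these pairs. -/

/-- The rank gap along a chain (with predecessor of the first element being `⊥`, of rank 0). -/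
def gap {P : Type} [PartialOrder P] (ρ : P → ℕ) {s : ℕ} (f : Fin s → P) (i : Fin s) : ℕ :=
  ρ (f i) - (if (i : ℕ) = 0 then 0
    else ρ (f ⟨(i : ℕ) - 1, lt_of_le_of_lt (Nat.sub_le _ _) i.2⟩))

open scoped Classical in
/-- The (characteristic) Chow polynomial of a finite bounded weakly ranked poset:
`H_P(t) = Σ_{⊥ = p_0 < p_1 < ⋯ < p_s ≤ ⊤} Π_i (t + t² + ⋯ + t^{ρ(p_i)-ρ(p_{i-1})-1})`. -/
noncomputable def chowPoly {P : Type} [Fintype P] [PartialOrder P] [BoundedOrder P]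
    (ρ : P → ℕ) : Polynomial ℤ :=
  ∑ s ∈ Finset.range (Fintype.card P + 1),
    ∑ f ∈ Finset.univ.filter
        (fun f : Fin s → P => (∀ i j : Fin s, i < j → f i < f j) ∧ ∀ i, (⊥ : P) < f i),
      ∏ i : Fin s, ∑ j ∈ Finset.Ico 1 (gap ρ f i), (Polynomial.X : Polynomial ℤ) ^ j

/-- The degree of a monomial. -/
def mdeg {σ : Type} (m : σ →₀ ℕ) : ℕ := m.sum fun _ e => e

/-- `m` is a Feichtner--Yuzvinsky monomial: supported on a chain
`⊥ = p_0 < p_1 < ⋯ < p_s ≤ ⊤` with exponents `1 ≤ ℓ_i ≤ ρ(p_i) - ρ(p_{i-1}) - 1`. -/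
def IsFY {P : Type} [PartialOrder P] [BoundedOrder P] (ρ : P → ℕ) (m : P →₀ ℕ) : Prop :=
  ∃ (s : ℕ) (f : Fin s → P) (ℓ : Fin s → ℕ),
    (∀ i j : Fin s, i < j → f i < f j) ∧ (∀ i, (⊥ : P) < f i) ∧
    (∀ i, 1 ≤ ℓ i) ∧ (∀ i, ℓ i < gap ρ f i) ∧
    m = ∑ i, Finsupp.single (f i) (ℓ i)

open Finset Polynomial

lemma coeff_prod_sum_X_pow {ι : Type*} [Fintype ι] [DecidableEq ι] (S : ι → Finset ℕ) (k : ℕ) :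
    (∏ i, ∑ j ∈ S i, (X : ℤ[X]) ^ j).coeff k = #{ℓ ∈ Fintype.piFinset S | ∑ i, ℓ i = k} := by
  simp only [prod_univ_sum, prod_pow_eq_pow_sum, finsetSum_coeff, coeff_X_pow, card_filter,
    Nat.cast_sum]
  refine sum_congr rfl fun ℓ _ => ?_
  split_ifs <;> simp_all

section SumSingle

variable {ι α : Type*} [Fintype ι]

lemma mdeg_sum_single {σ : Type} (f : ι → σ) (ℓ : ι → ℕ) :
    mdeg (∑ i, Finsupp.single (f i) (ℓ i)) = ∑ i, ℓ i := by
  rw [mdeg, ← Finsupp.sum_finsetSum_index (fun _ => rfl) (fun _ _ _ => rfl)]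
  simp [Finsupp.sum_single_index]

lemma sum_single_apply_of_injective {f : ι → α} (hf : f.Injective) (ℓ : ι → ℕ) (i : ι) :
    (∑ j, Finsupp.single (f j) (ℓ j)) (f i) = ℓ i := by
  classical
  simp [Finsupp.finsetSum_apply, Finsupp.single_apply, hf.eq_iff]

lemma sum_single_apply_of_notMem_range (f : ι → α) (ℓ : ι → ℕ) {a : α}
    (ha : a ∉ Set.range f) : (∑ j, Finsupp.single (f j) (ℓ j)) a = 0 := by
  classical
  simp only [Finsupp.finsetSum_apply, Finsupp.single_apply]
  exact sum_eq_zero fun j _ => if_neg fun h => ha ⟨j, h⟩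

lemma coe_support_sum_single {f : ι → α} (hf : f.Injective) {ℓ : ι → ℕ} (hℓ : ∀ i, ℓ i ≠ 0) :
    ((∑ j, Finsupp.single (f j) (ℓ j)).support : Set α) = Set.range f := by
  ext a
  simp only [Finset.mem_coe, Finsupp.mem_support_iff]
  constructor
  · exact fun ha => not_not.mp fun hr => ha (sum_single_apply_of_notMem_range f ℓ hr)
  · rintro ⟨i, rfl⟩
    rw [sum_single_apply_of_injective hf]
    exact hℓ i

end SumSingle

lemma StrictMono.sigma_eq_of_range_eq {P : Type*} [Preorder P] {s t : ℕ} {f : Fin s → P}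
    {g : Fin t → P} (hf : StrictMono f) (hg : StrictMono g) (h : Set.range f = Set.range g) :
    (⟨s, f⟩ : Σ n, Fin n → P) = ⟨t, g⟩ := by
  let e : Fin s ≃o Fin t :=
    (hf.orderIso f).trans ((OrderIso.setCongr _ _ h).trans (hg.orderIso g).symm)
  obtain rfl : s = t := Fin.equiv_iff_eq.mp ⟨e.toEquiv⟩
  have he : e = OrderIso.refl _ := Subsingleton.elim _ _
  congr 1
  funext i
  simpa [e] using congrArg (fun φ : Fin s ≃o Fin s => ((hg.orderIso g (φ i) : P))) he

noncomputable def fyMonomial {P : Type} (x : Σ s : ℕ, Σ _ : Fin s → P, Fin s → ℕ) :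
    P →₀ ℕ :=
  ∑ i, Finsupp.single (x.2.1 i) (x.2.2 i)

lemma fyMonomial_injOn {P : Type} [Preorder P] :
    Set.InjOn (fyMonomial (P := P)) {x | StrictMono x.2.1 ∧ ∀ i, x.2.2 i ≠ 0} := by
  rintro ⟨s, f, ℓ⟩ ⟨hf, hℓ⟩ ⟨t, g, ℓ'⟩ ⟨hg, hℓ'⟩ h
  have hrange : Set.range f = Set.range g := by
    rw [← coe_support_sum_single hf.injective hℓ, ← coe_support_sum_single hg.injective hℓ']
    exact congrArg (fun m : P →₀ ℕ => (m.support : Set P)) h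
  obtain ⟨⟩ := hf.sigma_eq_of_range_eq hg hrange
  congr
  funext i
  rw [← sum_single_apply_of_injective hf.injective ℓ i,
    ← sum_single_apply_of_injective hf.injective ℓ' i]
  exact DFunLike.congr_fun h (f i)

section FYData

variable {P : Type} [PartialOrder P] [BoundedOrder P]

open scoped Classical in
/-- The triples `⟨s, f, ℓ⟩` indexing the monomials `t^k` in the expansion of `chowPoly ρ`. -/
noncomputable def fyData [Fintype P] (ρ : P → ℕ) (k : ℕ) :
    Finset (Σ s : ℕ, Σ _ : Fin s → P, Fin s → ℕ) :=
  (range (Fintype.card P + 1)).sigma fun s =>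
    (univ.filter fun f : Fin s → P => (∀ i j : Fin s, i < j → f i < f j) ∧ ∀ i, ⊥ < f i).sigma
      fun f => {ℓ ∈ Fintype.piFinset fun i => Ico 1 (gap ρ f i) | ∑ i, ℓ i = k}

lemma coeff_chowPoly [Fintype P] (ρ : P → ℕ) (k : ℕ) : (chowPoly ρ).coeff k = #(fyData ρ k) := by
  classical
  simp only [chowPoly, fyData, finsetSum_coeff, card_sigma, coeff_prod_sum_X_pow, Nat.cast_sum]

lemma mem_fyData [Fintype P] {ρ : P → ℕ} {k : ℕ} {x : Σ s : ℕ, Σ _ : Fin s → P, Fin s → ℕ} :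
    x ∈ fyData ρ k ↔ StrictMono x.2.1 ∧ (∀ i, ⊥ < x.2.1 i) ∧
      (∀ i, 1 ≤ x.2.2 i ∧ x.2.2 i < gap ρ x.2.1 i) ∧ ∑ i, x.2.2 i = k := by
  obtain ⟨s, f, ℓ⟩ := x
  simp only [fyData, mem_sigma, mem_range, mem_filter, mem_univ, true_and, Fintype.mem_piFinset,
    mem_Ico]
  constructor
  · exact fun ⟨_, ⟨hf, hbot⟩, hℓ, hk⟩ => ⟨fun _ _ h => hf _ _ h, hbot, hℓ, hk⟩
  · intro ⟨hf, hbot, hℓ, hk⟩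
    have hs : s ≤ Fintype.card P := by simpa using Fintype.card_le_of_injective f hf.injective
    exact ⟨Nat.lt_succ_of_le hs, ⟨fun _ _ h => hf h, hbot⟩, hℓ, hk⟩

lemma coe_image_fyMonomial_fyData [Fintype P] [DecidableEq P] (ρ : P → ℕ) (k : ℕ) :
    ((fyData ρ k).image fyMonomial : Set (P →₀ ℕ)) = {m | IsFY ρ m ∧ mdeg m = k} := by
  ext m
  simp only [coe_image, Set.mem_image, mem_coe, mem_fyData, Set.mem_ofPred_eq, IsFY]
  constructor
  · rintro ⟨⟨s, f, ℓ⟩, ⟨hf, hbot, hℓ, hk⟩, rfl⟩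
    exact ⟨⟨s, f, ℓ, fun _ _ h => hf h, hbot, fun i => (hℓ i).1, fun i => (hℓ i).2, rfl⟩,
      (mdeg_sum_single f ℓ).trans hk⟩
  · rintro ⟨⟨s, f, ℓ, hf, hbot, hℓ₁, hℓ₂, rfl⟩, hk⟩
    exact ⟨⟨s, f, ℓ⟩, ⟨fun _ _ h => hf _ _ h, hbot, fun i => ⟨hℓ₁ i, hℓ₂ i⟩,
      (mdeg_sum_single f ℓ).symm.trans hk⟩, rfl⟩

end FYData

theorem stmt11_general {P : Type} [Fintype P] [PartialOrder P] [BoundedOrder P]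
    (ρ : P → ℕ) (k : ℕ) :
    (chowPoly ρ).coeff k = (Set.ncard {m : P →₀ ℕ | IsFY ρ m ∧ mdeg m = k} : ℤ) := by
  classical
  have hinj : Set.InjOn (fyMonomial (P := P)) ↑(fyData ρ k) :=
    fyMonomial_injOn.mono fun x hx => by
      obtain ⟨hf, -, hℓ, -⟩ := mem_fyData.mp hx
      exact ⟨hf, fun i => Nat.one_le_iff_ne_zero.mp (hℓ i).1⟩
  rw [coeff_chowPoly, ← coe_image_fyMonomial_fyData, Set.ncard_coe_finset,
    card_image_of_injOn hinj]

/-- For a finite bounded weakly ranked poset `P`, the number of FY monomials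
of degree `k` equals the coefficient of `t^k` in the Chow polynomial: `h_k = |FY^k|`. -/
theorem stmt11 {P : Type} [Fintype P] [PartialOrder P] [BoundedOrder P]
    (ρ : P → ℕ) (hmono : ∀ x y : P, x < y → ρ x < ρ y) (hbot : ρ ⊥ = 0) (k : ℕ) :
    (chowPoly ρ).coeff k = (Set.ncard {m : P →₀ ℕ | IsFY ρ m ∧ mdeg m = k} : ℤ) :=
  stmt11_general ρ k
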